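/- arXiv:1209.4328 — 2 statements merged into one kernel-verified Lean document; each statement's English description precedes it below -/
import Mathlib

section
/- Let d, m, n be positive integers. Suppose {(λ_α, x_α)}_{α∈A} is a cubature formula of degree n on B^d with respect to the weight w_{m/2}(x) = (1-‖x‖²)^{(m-1)/2}, and {(ν_β, t_β)}_{β∈B} is a cubature formula of degree n on S^m with respect to surface measure. Then the formula with nodes (x_α, √(1-‖x_α‖²)·t_β) ∈ S^{d+m} and weights λ_α·ν_β is a cubature formula of degree n on S^{d+m}: for every polynomial f of degree ≤ n in d+m+1 variables, ∑_{α,β} λ_α ν_β f(x_α, √(1-‖x_α‖²) t_β) = ∫_{S^{d+m}} f dω. -/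
/-!
Both sides are linear in `f`, so it suffices to treat a monomial `y ^ e` of degree `≤ n`, with
`e = (a, b)` split along `ℝ^d × ℝ^(m+1)`. At the node `(x, √(1 - ‖x‖²) t)` it equals
`x ^ a (1 - ‖x‖²)^(|b|/2) t ^ b`, so the product rule factors into the ball rule times the
sphere rule.

Sphere moments follow by integrating `y ^ c exp (-‖y‖²)` over `ℝ^D` in two ways: as a product of
the one-dimensional moments `g k = ∫ s ^ k exp (-s²) ds`, and in polar coordinates. This gives
`∫_{S^(D-1)} θ ^ c = 2 ∏ g cᵢ / Γ((D + |c|) / 2)`, and `g` vanishes at odd `k`, so if some `bⱼ` is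
odd both sides are `0`. Otherwise `|b| = 2k`, the ball rule is exact for the polynomial
`x ^ a (1 - ‖x‖²)^k` of degree `≤ n`, and the weighted ball moment (polar coordinates again, and a
Beta integral) times the sphere moment of `b` is the sphere moment of `e` in dimension `d + m + 1`.
-/

open MeasureTheory Metric

noncomputable def sphereMeasure (k : ℕ) :
    Measure (Metric.sphere (0 : EuclideanSpace ℝ (Fin (k + 1))) 1) :=
  (volume : Measure (EuclideanSpace ℝ (Fin (k + 1)))).toSphere

noncomputable def join {d m : ℕ} (x : EuclideanSpace ℝ (Fin d))
    (y : EuclideanSpace ℝ (Fin (m + 1))) : EuclideanSpace ℝ (Fin (d + (m + 1))) :=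
  (WithLp.equiv 2 (Fin (d + (m + 1)) → ℝ)).symm (Fin.append x y)

open Set Real

local notation "𝔼" n:max => EuclideanSpace ℝ (Fin n)

local notation "ω" n:max => Measure.toSphere (volume : Measure (EuclideanSpace ℝ (Fin n)))

section PolarCoordinates

variable {E F : Type*} [NormedAddCommGroup E] [NormedSpace ℝ E] [NormedAddCommGroup F]
  [NormedSpace ℝ F]

theorem norm_smul_coe_sphere {r : ℝ} (hr : 0 ≤ r) (θ : sphere (0 : E) 1) : ‖r • (θ : E)‖ = r := by
  rw [norm_smul, norm_eq_of_mem_sphere θ, Real.norm_of_nonneg hr, mul_one]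

theorem integral_volumeIoiPow (n : ℕ) (h : ℝ → F) :
    ∫ r, h r ∂(Measure.volumeIoiPow n) = ∫ r in Ioi (0 : ℝ), r ^ n • h r := by
  rw [Measure.volumeIoiPow, integral_withDensity_eq_integral_toReal_smul
      (measurable_subtype_coe.pow_const n).ennreal_ofReal (by simp),
    integral_subtype_comap measurableSet_Ioi fun r ↦ (ENNReal.ofReal (r ^ n)).toReal • h r]
  refine setIntegral_congr_fun measurableSet_Ioi fun r hr ↦ ?_
  rw [ENNReal.toReal_ofReal (pow_nonneg (le_of_lt hr) n)]

variable [MeasurableSpace E] [BorelSpace E] [FiniteDimensional ℝ E] [Nontrivial E]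

theorem integral_eq_integral_toSphere_integral_Ioi (μ : Measure E) [μ.IsAddHaarMeasure]
    {f : E → F} (hf : Integrable f μ) :
    ∫ y, f y ∂μ =
      ∫ θ, (∫ r in Ioi (0 : ℝ), r ^ (Module.finrank ℝ E - 1) • f (r • (θ : E))) ∂μ.toSphere := by
  have hpolar := μ.measurePreserving_homeomorphUnitSphereProd
  have hemb := (homeomorphUnitSphereProd E).measurableEmbedding
  have hcompl : MeasurableSet ({0}ᶜ : Set E) := (measurableSet_singleton 0).compl
  set g : sphere (0 : E) 1 × Ioi (0 : ℝ) → F := fun p ↦ f ((p.2 : ℝ) • (p.1 : E))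
  have hg : g ∘ homeomorphUnitSphereProd E = f ∘ Subtype.val := funext fun z ↦ by
    change f ((‖z.1‖ / 1) • (1 : ℝ) • ‖z.1‖⁻¹ • z.1) = f z
    rw [div_one, one_smul, smul_inv_smul₀ (norm_ne_zero_iff.2 z.2)]
  have hg_int :
      Integrable g (μ.toSphere.prod (Measure.volumeIoiPow (Module.finrank ℝ E - 1))) := by
    rw [← hpolar.integrable_comp_emb hemb, hg, ← integrableOn_iff_comap_subtypeVal hcompl]
    exact hf.integrableOn
  calc ∫ y, f y ∂μ = ∫ z : ({0}ᶜ : Set E), f z ∂(μ.comap Subtype.val) := by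
        rw [integral_subtype_comap hcompl, restrict_compl_singleton]
    _ = ∫ p, g p ∂(μ.toSphere.prod (Measure.volumeIoiPow (Module.finrank ℝ E - 1))) := by
        rw [← hpolar.integral_comp hemb]
        exact congrArg (integral _) hg.symm
    _ = _ := by
        rw [integral_prod g hg_int]
        exact integral_congr_ae
          (.of_forall fun θ ↦ integral_volumeIoiPow _ fun r ↦ f (r • (θ : E)))

end PolarCoordinates

noncomputable def gaussianMoment (k : ℕ) : ℝ := ∫ s : ℝ, s ^ k * exp (-s ^ 2)

theorem integrable_pow_mul_exp_neg_sq (k : ℕ) : Integrable fun s : ℝ ↦ s ^ k * exp (-s ^ 2) := by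
  simpa [rpow_natCast] using integrable_rpow_mul_exp_neg_mul_sq one_pos
    (by linarith [k.cast_nonneg (α := ℝ)] : (-1 : ℝ) < k)

theorem gaussianMoment_of_odd {k : ℕ} (hk : Odd k) : gaussianMoment k = 0 := by
  have h := integral_neg_eq_self (fun s : ℝ ↦ s ^ k * exp (-s ^ 2)) volume
  simp only [hk.neg_pow, neg_sq, neg_mul, integral_neg] at h
  rw [gaussianMoment]
  linarith

theorem integral_Ioi_pow_mul_exp_neg_sq (k : ℕ) :
    ∫ r in Ioi (0 : ℝ), r ^ k * exp (-r ^ 2) = Gamma ((k + 1) / 2) / 2 := by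
  have h := integral_rpow_mul_exp_neg_rpow two_pos
    (by linarith [k.cast_nonneg (α := ℝ)] : (-1 : ℝ) < k)
  simp only [rpow_natCast, rpow_two] at h
  rw [h]
  ring

theorem integral_Ioc_rpow_mul_one_sub_rpow {s t : ℝ} (hs : 0 < s) (ht : 0 < t) :
    ∫ y in Ioc (0 : ℝ) 1, y ^ (s - 1) * (1 - y) ^ (t - 1) =
      Gamma s * Gamma t / Gamma (s + t) := by
  have hβ := Complex.betaIntegral_eq_Gamma_mul_div s t (by simpa using hs) (by simpa using ht)
  rw [Complex.betaIntegral, intervalIntegral.integral_of_le zero_le_one] at hβ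
  apply Complex.ofReal_injective
  push_cast [← Complex.Gamma_ofReal]
  rw [← hβ, ← integral_complex_ofReal]
  refine setIntegral_congr_fun measurableSet_Ioc fun y hy ↦ ?_
  push_cast [Complex.ofReal_cpow hy.1.le, Complex.ofReal_cpow (sub_nonneg.2 hy.2)]
  rfl

theorem integral_Ioc_pow_mul_one_sub_sq_rpow (k : ℕ) {β : ℝ} (hβ : -1 < β) :
    ∫ r in Ioc (0 : ℝ) 1, r ^ k * (1 - r ^ 2) ^ β =
      Gamma ((k + 1) / 2) * Gamma (β + 1) / (2 * Gamma ((k + 1) / 2 + (β + 1))) := by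
  set g : ℝ → ℝ :=
    (Ioc 0 1).indicator fun u ↦ u ^ (((k : ℝ) + 1) / 2 - 1) * (1 - u) ^ (β + 1 - 1)
  -- the substitution `u = r ^ 2`
  have hsub : ∀ r ∈ Ioi (0 : ℝ), (|(2 : ℝ)| * r ^ ((2 : ℝ) - 1)) • g (r ^ (2 : ℝ)) =
      (Ioc 0 1).indicator (fun r ↦ 2 * (r ^ k * (1 - r ^ 2) ^ β)) r := by
    intro r (hr : 0 < r)
    simp only [g]
    have hmem : r ^ (2 : ℝ) ∈ Ioc (0 : ℝ) 1 ↔ r ∈ Ioc (0 : ℝ) 1 := by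
      simp only [rpow_two, mem_Ioc, hr, true_and, pow_pos hr 2, sq_le_one_iff₀ hr.le]
    by_cases hr1 : r ∈ Ioc (0 : ℝ) 1
    · rw [indicator_of_mem (hmem.2 hr1), indicator_of_mem hr1, ← rpow_mul hr.le, rpow_two,
        smul_eq_mul, abs_two, show (2 : ℝ) * ((k + 1) / 2 - 1) = k - 1 by ring,
        show (2 : ℝ) - 1 = 1 by norm_num, rpow_one, rpow_sub hr, rpow_one, rpow_natCast,
        add_sub_cancel_right]
      field_simp
    · rw [indicator_of_notMem (mt hmem.1 hr1), indicator_of_notMem hr1, smul_zero]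
  have key := integral_comp_rpow_Ioi g two_ne_zero
  rw [setIntegral_congr_fun measurableSet_Ioi hsub, setIntegral_indicator measurableSet_Ioc,
    setIntegral_indicator measurableSet_Ioc, inter_eq_right.2 Ioc_subset_Ioi_self,
    integral_const_mul,
    integral_Ioc_rpow_mul_one_sub_rpow (by positivity) (neg_lt_iff_pos_add.1 hβ)] at key
  linear_combination key / 2

namespace EuclideanSpace

variable {ι : Type*} [Fintype ι]

theorem prod_smul_apply_pow (r : ℝ) (y : EuclideanSpace ℝ ι) (c : ι → ℕ) :
    ∏ i, (r • y) i ^ c i = r ^ (∑ i, c i) * ∏ i, y i ^ c i := by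
  simp only [PiLp.smul_apply, smul_eq_mul, mul_pow, Finset.prod_mul_distrib,
    Finset.prod_pow_eq_pow_sum]

theorem abs_prod_apply_pow_le_one {y : EuclideanSpace ℝ ι} (hy : ‖y‖ ≤ 1) (c : ι → ℕ) :
    |∏ i, y i ^ c i| ≤ 1 := by
  rw [Finset.abs_prod]
  refine Finset.prod_le_one (fun _ _ ↦ abs_nonneg _) fun i _ ↦ ?_
  rw [abs_pow]
  exact pow_le_one₀ (abs_nonneg _) ((PiLp.norm_apply_le y i).trans hy)

theorem prod_apply_pow_mul_exp_neg_norm_sq (y : EuclideanSpace ℝ ι) (c : ι → ℕ) :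
    (∏ i, y i ^ c i) * exp (-‖y‖ ^ 2) = ∏ i, (y i ^ c i * exp (-y i ^ 2)) := by
  rw [Finset.prod_mul_distrib, EuclideanSpace.norm_sq_eq, ← Finset.sum_neg_distrib, exp_sum]
  simp only [Real.norm_eq_abs, sq_abs]

theorem integral_prod_apply_pow_mul_exp_neg_norm_sq (c : ι → ℕ) :
    ∫ y : EuclideanSpace ℝ ι, (∏ i, y i ^ c i) * exp (-‖y‖ ^ 2) = ∏ i, gaussianMoment (c i) := by
  simp only [prod_apply_pow_mul_exp_neg_norm_sq]
  exact ((volume_preserving_symm_measurableEquiv_toLp ι).integral_comp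
    (MeasurableEquiv.toLp 2 (ι → ℝ)).symm.measurableEmbedding _).trans
    (integral_fintype_prod_volume_eq_prod fun i s ↦ s ^ c i * exp (-s ^ 2))

theorem integrable_prod_apply_pow_mul_exp_neg_norm_sq (c : ι → ℕ) :
    Integrable fun y : EuclideanSpace ℝ ι ↦ (∏ i, y i ^ c i) * exp (-‖y‖ ^ 2) := by
  simp only [prod_apply_pow_mul_exp_neg_norm_sq]
  exact ((volume_preserving_symm_measurableEquiv_toLp ι).integrable_comp_emb
    (MeasurableEquiv.toLp 2 (ι → ℝ)).symm.measurableEmbedding).2 <|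
    Integrable.fintype_prod (f := fun i s ↦ s ^ c i * exp (-s ^ 2))
      fun i ↦ integrable_pow_mul_exp_neg_sq (c i)

variable {D : ℕ}

theorem integrableOn_closedBall_prod_apply_pow_mul_rpow (a : Fin D → ℕ) {β : ℝ} (hβ : 0 ≤ β) :
    IntegrableOn (fun z : 𝔼 D ↦ (∏ i, z i ^ a i) * (1 - ‖z‖ ^ 2) ^ β) (closedBall 0 1) := by
  refine Measure.integrableOn_of_bounded (M := 1) measure_closedBall_lt_top.ne
    (by fun_prop) ((ae_restrict_mem measurableSet_closedBall).mono fun z hz ↦ ?_)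
  have hz1 : ‖z‖ ≤ 1 := mem_closedBall_zero_iff.1 hz
  have hw0 : 0 ≤ 1 - ‖z‖ ^ 2 := by nlinarith [norm_nonneg z]
  rw [Real.norm_eq_abs, abs_mul, abs_of_nonneg (rpow_nonneg hw0 β)]
  exact mul_le_one₀ (abs_prod_apply_pow_le_one hz1 a) (rpow_nonneg hw0 β)
    (rpow_le_one hw0 (by nlinarith [norm_nonneg z]) hβ)

variable [NeZero D]

theorem integral_toSphere_prod_apply_pow (c : Fin D → ℕ) :
    ∫ θ : sphere (0 : 𝔼 D) 1, ∏ i, (θ : 𝔼 D) i ^ c i ∂ω D =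
      2 * (∏ i, gaussianMoment (c i)) / Gamma ((D + ∑ i, c i) / 2) := by
  have hradial (θ : sphere (0 : 𝔼 D) 1) :
      ∫ r in Ioi (0 : ℝ), r ^ (D - 1) •
          ((∏ i, (r • (θ : 𝔼 D)) i ^ c i) * exp (-‖r • (θ : 𝔼 D)‖ ^ 2)) =
        (∏ i, (θ : 𝔼 D) i ^ c i) * (Gamma ((D + ∑ i, c i) / 2) / 2) := by
    have hpt : ∀ r ∈ Ioi (0 : ℝ), r ^ (D - 1) •
        ((∏ i, (r • (θ : 𝔼 D)) i ^ c i) * exp (-‖r • (θ : 𝔼 D)‖ ^ 2)) =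
        (∏ i, (θ : 𝔼 D) i ^ c i) * (r ^ (D - 1 + ∑ i, c i) * exp (-r ^ 2)) := fun r hr ↦ by
      rw [prod_smul_apply_pow, norm_smul_coe_sphere (le_of_lt hr), smul_eq_mul, pow_add]
      ring
    rw [setIntegral_congr_fun measurableSet_Ioi hpt, integral_const_mul,
      integral_Ioi_pow_mul_exp_neg_sq]
    push_cast [Nat.cast_sub NeZero.one_le]
    ring_nf
  have key := integral_eq_integral_toSphere_integral_Ioi volume
    (integrable_prod_apply_pow_mul_exp_neg_norm_sq c)
  rw [integral_prod_apply_pow_mul_exp_neg_norm_sq, finrank_euclideanSpace_fin,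
    integral_congr_ae (.of_forall hradial), integral_mul_const] at key
  have hD : (0 : ℝ) < D := Nat.cast_pos.2 (NeZero.pos D)
  have hΓ : Gamma ((D + ∑ i, c i) / 2) ≠ 0 := (Gamma_pos_of_pos (by positivity)).ne'
  rw [key]
  field_simp

theorem integral_toSphere_prod_apply_pow_eq_zero_of_odd (c : Fin D → ℕ) {j : Fin D}
    (hj : Odd (c j)) : ∫ θ : sphere (0 : 𝔼 D) 1, ∏ i, (θ : 𝔼 D) i ^ c i ∂ω D = 0 := by
  rw [integral_toSphere_prod_apply_pow,
    Finset.prod_eq_zero (Finset.mem_univ j) (gaussianMoment_of_odd hj), mul_zero, zero_div]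

theorem setIntegral_closedBall_prod_apply_pow_mul_rpow (a : Fin D → ℕ) {β : ℝ} (hβ : 0 ≤ β) :
    ∫ z in closedBall (0 : 𝔼 D) 1, (∏ i, z i ^ a i) * (1 - ‖z‖ ^ 2) ^ β =
      (∏ i, gaussianMoment (a i)) * Gamma (β + 1) / Gamma ((D + ∑ i, a i) / 2 + (β + 1)) := by
  set f : 𝔼 D → ℝ := fun z ↦ (∏ i, z i ^ a i) * (1 - ‖z‖ ^ 2) ^ β
  have hradial (θ : sphere (0 : 𝔼 D) 1) :
      ∫ r in Ioi (0 : ℝ), r ^ (D - 1) • (closedBall 0 1).indicator f (r • (θ : 𝔼 D)) =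
        (∏ i, (θ : 𝔼 D) i ^ a i) *
          (Gamma ((D + ∑ i, a i) / 2) * Gamma (β + 1) /
            (2 * Gamma ((D + ∑ i, a i) / 2 + (β + 1)))) := by
    have hpt : ∀ r ∈ Ioi (0 : ℝ), r ^ (D - 1) • (closedBall 0 1).indicator f (r • (θ : 𝔼 D)) =
        (∏ i, (θ : 𝔼 D) i ^ a i) *
          (Ioc 0 1).indicator (fun r ↦ r ^ (D - 1 + ∑ i, a i) * (1 - r ^ 2) ^ β) r := by
      intro r (hr : 0 < r)
      have hmem : r • (θ : 𝔼 D) ∈ closedBall 0 1 ↔ r ∈ Ioc 0 1 := by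
        rw [mem_closedBall_zero_iff, norm_smul_coe_sphere hr.le, mem_Ioc, and_iff_right hr]
      by_cases hr1 : r ∈ Ioc 0 1
      · rw [indicator_of_mem (hmem.2 hr1), indicator_of_mem hr1]
        simp only [f]
        rw [prod_smul_apply_pow, norm_smul_coe_sphere hr.le, smul_eq_mul, pow_add]
        ring
      · rw [indicator_of_notMem (mt hmem.1 hr1), indicator_of_notMem hr1, smul_zero, mul_zero]
    rw [setIntegral_congr_fun measurableSet_Ioi hpt, integral_const_mul,
      setIntegral_indicator measurableSet_Ioc, inter_eq_right.2 Ioc_subset_Ioi_self,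
      integral_Ioc_pow_mul_one_sub_sq_rpow _ (by linarith)]
    push_cast [Nat.cast_sub NeZero.one_le]
    ring_nf
  have key := integral_eq_integral_toSphere_integral_Ioi volume
    ((integrable_indicator_iff measurableSet_closedBall).2
      (integrableOn_closedBall_prod_apply_pow_mul_rpow a hβ))
  rw [integral_indicator measurableSet_closedBall, finrank_euclideanSpace_fin,
    integral_congr_ae (.of_forall hradial), integral_mul_const,
    integral_toSphere_prod_apply_pow] at key
  have hD : (0 : ℝ) < D := Nat.cast_pos.2 (NeZero.pos D)
  have hΓ : Gamma ((D + ∑ i, a i) / 2) ≠ 0 := (Gamma_pos_of_pos (by positivity)).ne'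
  rw [key]
  field_simp

end EuclideanSpace

open EuclideanSpace in
theorem integral_toSphere_prod_apply_pow_append {d m k : ℕ} [NeZero d] (hm : 0 < m)
    (a : Fin d → ℕ) (b : Fin (m + 1) → ℕ) (hb : ∑ j, b j = 2 * k) :
    ∫ y : sphere (0 : 𝔼 (d + (m + 1))) 1, ∏ i, (y : 𝔼 (d + (m + 1))) i ^ Fin.append a b i
        ∂ω (d + (m + 1)) =
      (∫ z in closedBall (0 : 𝔼 d) 1,
          (∏ i, z i ^ a i) * (1 - ‖z‖ ^ 2) ^ ((k : ℝ) + ((m : ℝ) - 1) / 2)) *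
        ∫ η : sphere (0 : 𝔼 (m + 1)) 1, ∏ j, (η : 𝔼 (m + 1)) j ^ b j ∂ω (m + 1) := by
  have hβ : (0 : ℝ) ≤ k + ((m : ℝ) - 1) / 2 := by
    have : (1 : ℝ) ≤ m := Nat.one_le_cast.2 hm
    positivity
  rw [integral_toSphere_prod_apply_pow, integral_toSphere_prod_apply_pow,
    setIntegral_closedBall_prod_apply_pow_mul_rpow a hβ, Fin.prod_univ_add, Fin.sum_univ_add]
  simp only [Fin.append_left, Fin.append_right]
  -- the Beta weight of the ball cancels the Gamma factor of the sphere moment of `b`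
  have hΓb : (k : ℝ) + ((m : ℝ) - 1) / 2 + 1 = ((m + 1 : ℕ) + ∑ j, (b j : ℝ)) / 2 := by
    rw [← Nat.cast_sum, hb]
    push_cast
    ring
  have hΓ : ((d : ℝ) + ∑ i, (a i : ℝ)) / 2 + ((k : ℝ) + ((m : ℝ) - 1) / 2 + 1) =
      ((d + (m + 1) : ℕ) + (∑ i, (a i : ℝ) + ∑ j, (b j : ℝ))) / 2 := by
    rw [hΓb]
    push_cast
    ring
  have hΓb_ne : Gamma (((m + 1 : ℕ) + ∑ j, (b j : ℝ)) / 2) ≠ 0 :=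
    (Gamma_pos_of_pos (by positivity)).ne'
  push_cast [hΓ, hΓb]
  field_simp
  ring_nf

theorem prod_join_apply_pow {d m : ℕ} (x : 𝔼 d) (y : 𝔼 (m + 1)) (a : Fin d → ℕ)
    (b : Fin (m + 1) → ℕ) :
    ∏ i, join x y i ^ Fin.append a b i = (∏ i, x i ^ a i) * ∏ j, y j ^ b j := by
  simp [join, Fin.prod_univ_add]

theorem sum_sum_mul_prod_join_apply_pow_eq_integral {d m n : ℕ} [NeZero d] (hm : 0 < m)
    {ι κ : Type*} [Fintype ι] [Fintype κ] (lam : ι → ℝ) (x : ι → 𝔼 d) (nu : κ → ℝ)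
    (t : κ → sphere (0 : 𝔼 (m + 1)) 1) (hx : ∀ α, ‖x α‖ ≤ 1)
    (hball : ∀ (a : Fin d → ℕ) (k : ℕ), ∑ i, a i + 2 * k ≤ n →
      ∑ α, lam α * ((∏ i, x α i ^ a i) * (1 - ‖x α‖ ^ 2) ^ k) =
        ∫ z in closedBall (0 : 𝔼 d) 1,
          (∏ i, z i ^ a i) * (1 - ‖z‖ ^ 2) ^ ((k : ℝ) + ((m : ℝ) - 1) / 2))
    (hsph : ∀ b : Fin (m + 1) → ℕ, ∑ j, b j ≤ n →
      ∑ β, nu β * ∏ j, (t β : 𝔼 (m + 1)) j ^ b j =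
        ∫ η : sphere (0 : 𝔼 (m + 1)) 1, ∏ j, (η : 𝔼 (m + 1)) j ^ b j ∂ω (m + 1))
    (e : Fin (d + (m + 1)) → ℕ) (he : ∑ i, e i ≤ n) :
    ∑ α, ∑ β, lam α * nu β * ∏ i, join (x α) (√(1 - ‖x α‖ ^ 2) • (t β : 𝔼 (m + 1))) i ^ e i =
      ∫ y : sphere (0 : 𝔼 (d + (m + 1))) 1, ∏ i, (y : 𝔼 (d + (m + 1))) i ^ e i
        ∂ω (d + (m + 1)) := by
  obtain ⟨a, b, rfl⟩ : ∃ a b, e = Fin.append a b := ⟨_, _, Fin.append_castAdd_natAdd.symm⟩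
  rw [Fin.sum_univ_add] at he
  simp only [Fin.append_left, Fin.append_right] at he
  have hsplit : ∑ α, ∑ β, lam α * nu β *
      ∏ i, join (x α) (√(1 - ‖x α‖ ^ 2) • (t β : 𝔼 (m + 1))) i ^ Fin.append a b i =
      (∑ α, lam α * ((∏ i, x α i ^ a i) * √(1 - ‖x α‖ ^ 2) ^ ∑ j, b j)) *
        ∑ β, nu β * ∏ j, (t β : 𝔼 (m + 1)) j ^ b j := by
    simp only [prod_join_apply_pow, EuclideanSpace.prod_smul_apply_pow, Finset.sum_mul_sum]
    exact Finset.sum_congr rfl fun _ _ ↦ Finset.sum_congr rfl fun _ _ ↦ by ring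
  rw [hsplit, hsph b (by omega)]
  by_cases hodd : ∃ j, Odd (b j)
  · obtain ⟨j, hj⟩ := hodd
    rw [EuclideanSpace.integral_toSphere_prod_apply_pow_eq_zero_of_odd b hj,
      EuclideanSpace.integral_toSphere_prod_apply_pow_eq_zero_of_odd (Fin.append a b)
        (j := Fin.natAdd d j)
        (by rwa [Fin.append_right]), mul_zero]
  · obtain ⟨k, hk⟩ := Finset.even_sum b fun j _ ↦ Nat.not_odd_iff_even.1 (not_exists.1 hodd j)
    have hsqrt (α : ι) : √(1 - ‖x α‖ ^ 2) ^ ∑ j, b j = (1 - ‖x α‖ ^ 2) ^ k := by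
      have : 0 ≤ 1 - ‖x α‖ ^ 2 := by nlinarith [norm_nonneg (x α), hx α]
      rw [hk, ← two_mul, pow_mul, sq_sqrt this]
    simp only [hsqrt]
    rw [hball a k (by omega), integral_toSphere_prod_apply_pow_append (k := k) hm a b (by omega)]

namespace MvPolynomial

theorem sum_mul_eval_eq_integral_eval {σ ι X : Type*} [Fintype σ] [Fintype ι]
    [MeasurableSpace X] {μ : Measure X} (w : ι → ℝ) (p : ι → σ → ℝ) (q : X → σ → ℝ)
    (f : MvPolynomial σ ℝ) (hint : ∀ c ∈ f.support, Integrable (fun z ↦ ∏ i, q z i ^ c i) μ)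
    (hexact : ∀ c ∈ f.support, ∑ k, w k * ∏ i, p k i ^ c i = ∫ z, ∏ i, q z i ^ c i ∂μ) :
    ∑ k, w k * eval (p k) f = ∫ z, eval (q z) f ∂μ := by
  simp only [eval_eq', Finset.mul_sum]
  rw [integral_finsetSum _ fun c hc ↦ (hint c hc).const_mul _, Finset.sum_comm]
  refine Finset.sum_congr rfl fun c hc ↦ ?_
  rw [integral_const_mul, ← hexact c hc, Finset.mul_sum]
  exact Finset.sum_congr rfl fun _ _ ↦ by ring

variable {σ : Type*} [Fintype σ]

theorem totalDegree_prod_X_pow_le (a : σ → ℕ) :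
    (∏ i, X i ^ a i : MvPolynomial σ ℝ).totalDegree ≤ ∑ i, a i :=
  (totalDegree_finsetProd _ _).trans (Finset.sum_le_sum fun i _ ↦ (totalDegree_X_pow i (a i)).le)

theorem totalDegree_one_sub_sum_X_sq_le : (1 - ∑ i, X i ^ 2 : MvPolynomial σ ℝ).totalDegree ≤ 2 :=
  (totalDegree_sub _ _).trans <| max_le (by simp) <| (totalDegree_finsetSum _ _).trans <|
    Finset.sup_le fun i _ ↦ (totalDegree_X_pow i 2).le

theorem sum_mul_prod_pow_mul_one_sub_norm_sq_pow_eq_setIntegral {d n : ℕ} {ι : Type*}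
    [Fintype ι] (lam : ι → ℝ) (x : ι → 𝔼 d) {β : ℝ} (hβ : 0 ≤ β)
    (hcub : ∀ p : MvPolynomial (Fin d) ℝ, p.totalDegree ≤ n →
      ∑ α, lam α * eval (fun i ↦ x α i) p =
        ∫ z in closedBall (0 : 𝔼 d) 1, eval (fun i ↦ z i) p * (1 - ‖z‖ ^ 2) ^ β)
    (a : Fin d → ℕ) (k : ℕ) (hak : ∑ i, a i + 2 * k ≤ n) :
    ∑ α, lam α * ((∏ i, x α i ^ a i) * (1 - ‖x α‖ ^ 2) ^ k) =
      ∫ z in closedBall (0 : 𝔼 d) 1, (∏ i, z i ^ a i) * (1 - ‖z‖ ^ 2) ^ ((k : ℝ) + β) := by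
  set p : MvPolynomial (Fin d) ℝ := (∏ i, X i ^ a i) * (1 - ∑ i, X i ^ 2) ^ k
  have hdeg : p.totalDegree ≤ n :=
    calc _ ≤ ∑ i, a i + k * 2 := (totalDegree_mul _ _).trans <| add_le_add
            (totalDegree_prod_X_pow_le a)
            ((totalDegree_pow _ k).trans (Nat.mul_le_mul_left k totalDegree_one_sub_sum_X_sq_le))
      _ ≤ n := by omega
  have heval (z : 𝔼 d) : eval (fun i ↦ z i) p = (∏ i, z i ^ a i) * (1 - ‖z‖ ^ 2) ^ k := by
    simp [p, EuclideanSpace.norm_sq_eq]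
  simp only [← heval, hcub _ hdeg]
  refine setIntegral_congr_fun measurableSet_closedBall fun z hz ↦ ?_
  have hw : 0 ≤ 1 - ‖z‖ ^ 2 := by nlinarith [norm_nonneg z, mem_closedBall_zero_iff.1 hz]
  rw [heval, mul_assoc, rpow_add_of_nonneg hw k.cast_nonneg hβ, rpow_natCast]

end MvPolynomial

theorem ball_cubature_gives_sphere_cubature_general (d m n : ℕ) (hd : 0 < d) (hm : 0 < m)
    (ι κ : Type) [Fintype ι] [Fintype κ]
    (lam : ι → ℝ) (x : ι → EuclideanSpace ℝ (Fin d))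
    (nu : κ → ℝ) (t : κ → Metric.sphere (0 : EuclideanSpace ℝ (Fin (m + 1))) 1)
    (hxmem : ∀ α, x α ∈ Metric.closedBall (0 : EuclideanSpace ℝ (Fin d)) 1)
    (hballcub : ∀ p : MvPolynomial (Fin d) ℝ, p.totalDegree ≤ n →
      ∑ α, lam α * MvPolynomial.eval (fun i => x α i) p =
        ∫ z in Metric.closedBall (0 : EuclideanSpace ℝ (Fin d)) 1,
          MvPolynomial.eval (fun i => z i) p * (1 - ‖z‖ ^ 2) ^ (((m : ℝ) - 1) / 2))
    (hsphcub : ∀ q : MvPolynomial (Fin (m + 1)) ℝ, q.totalDegree ≤ n →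
      ∑ β, nu β * MvPolynomial.eval (fun i => (t β : EuclideanSpace ℝ (Fin (m + 1))) i) q =
        ∫ η : Metric.sphere (0 : EuclideanSpace ℝ (Fin (m + 1))) 1,
          MvPolynomial.eval (fun i => (η : EuclideanSpace ℝ (Fin (m + 1))) i) q
          ∂(sphereMeasure m))
    (f : MvPolynomial (Fin (d + (m + 1))) ℝ) (hf : f.totalDegree ≤ n) :
    ∑ α, ∑ β, lam α * nu β *
      MvPolynomial.eval
        (fun i => (join (x α)
          (Real.sqrt (1 - ‖x α‖ ^ 2) • (t β : EuclideanSpace ℝ (Fin (m + 1))))) i) f =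
    ∫ y : Metric.sphere (0 : EuclideanSpace ℝ (Fin (d + (m + 1)))) 1,
      MvPolynomial.eval (fun i => (y : EuclideanSpace ℝ (Fin (d + (m + 1)))) i) f
      ∂(sphereMeasure (d + m)) := by
  have : NeZero d := ⟨hd.ne'⟩
  unfold sphereMeasure at hsphcub ⊢
  have hball := MvPolynomial.sum_mul_prod_pow_mul_one_sub_norm_sq_pow_eq_setIntegral lam x
    (div_nonneg (sub_nonneg.2 (Nat.one_le_cast.2 hm)) zero_le_two) hballcub
  have hsph (b : Fin (m + 1) → ℕ) (hb : ∑ j, b j ≤ n) := by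
    simpa using hsphcub (∏ j, MvPolynomial.X j ^ b j)
      ((MvPolynomial.totalDegree_prod_X_pow_le b).trans hb)
  rw [← Fintype.sum_prod_type' fun α β ↦ lam α * nu β * _]
  refine MvPolynomial.sum_mul_eval_eq_integral_eval _ _ _ f (fun c _ ↦ ?_) fun c hc ↦ ?_
  · exact (by fun_prop : Continuous _).integrable_of_hasCompactSupport
      (HasCompactSupport.of_compactSpace _)
  · refine (Fintype.sum_prod_type' _).trans <| sum_sum_mul_prod_join_apply_pow_eq_integral hm
      lam x nu t (fun α ↦ mem_closedBall_zero_iff.1 (hxmem α)) hball hsph c ?_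
    simpa [Finsupp.sum_fintype] using (MvPolynomial.le_totalDegree hc).trans hf

theorem ball_cubature_gives_sphere_cubature (d m n : ℕ) (hd : 0 < d) (hm : 0 < m)
    (hn : 0 < n) (ι κ : Type) [Fintype ι] [Fintype κ]
    (lam : ι → ℝ) (x : ι → EuclideanSpace ℝ (Fin d))
    (nu : κ → ℝ) (t : κ → Metric.sphere (0 : EuclideanSpace ℝ (Fin (m + 1))) 1)
    (hlampos : ∀ α, 0 < lam α) (hnupos : ∀ β, 0 < nu β)
    (hxmem : ∀ α, x α ∈ Metric.closedBall (0 : EuclideanSpace ℝ (Fin d)) 1)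
    (hballcub : ∀ p : MvPolynomial (Fin d) ℝ, p.totalDegree ≤ n →
      ∑ α, lam α * MvPolynomial.eval (fun i => x α i) p =
        ∫ z in Metric.closedBall (0 : EuclideanSpace ℝ (Fin d)) 1,
          MvPolynomial.eval (fun i => z i) p * (1 - ‖z‖ ^ 2) ^ (((m : ℝ) - 1) / 2))
    (hsphcub : ∀ q : MvPolynomial (Fin (m + 1)) ℝ, q.totalDegree ≤ n →
      ∑ β, nu β * MvPolynomial.eval (fun i => (t β : EuclideanSpace ℝ (Fin (m + 1))) i) q =
        ∫ η : Metric.sphere (0 : EuclideanSpace ℝ (Fin (m + 1))) 1,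
          MvPolynomial.eval (fun i => (η : EuclideanSpace ℝ (Fin (m + 1))) i) q
          ∂(sphereMeasure m))
    (f : MvPolynomial (Fin (d + (m + 1))) ℝ) (hf : f.totalDegree ≤ n) :
    ∑ α, ∑ β, lam α * nu β *
      MvPolynomial.eval
        (fun i => (join (x α)
          (Real.sqrt (1 - ‖x α‖ ^ 2) • (t β : EuclideanSpace ℝ (Fin (m + 1))))) i) f =
    ∫ y : Metric.sphere (0 : EuclideanSpace ℝ (Fin (d + (m + 1)))) 1,
      MvPolynomial.eval (fun i => (y : EuclideanSpace ℝ (Fin (d + (m + 1)))) i) f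
      ∂(sphereMeasure (d + m)) :=
  ball_cubature_gives_sphere_cubature_general d m n hd hm ι κ lam x nu t hxmem hballcub hsphcub f hf
end

section
/- Let d, m be positive integers, x ∈ B^d, and f a polynomial of degree ≤ n in d+m+1 variables. Then the function η ↦ f(x, √(1-‖x‖²)·η) integrated over S^m yields a polynomial of degree ≤ n in x; more precisely, there exists a polynomial g of degree ≤ n in d variables such that for all x ∈ B^d, ∫_{S^m} f(x, √(1-‖x‖²)η) dω_m(η) = g(x). -/
/-! Write `f` as a sum of monomials `x^α y^β`. Substituting `y = t η` with `t = √(1 - ‖x‖²)` and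
integrating over the sphere turns each monomial into `x^α t^|β| M_β`, where `M_β = ∫ η^β dω`.
The antipodal map preserves `ω` and changes the sign of `η^β` when `|β|` is odd, so then `M_β = 0`;
when `|β|` is even, `t^|β| = (1 - ‖x‖²)^(|β|/2)` is a polynomial in `x` of degree `|β|`.
Hence the average is `∑ c_{αβ} M_β x^α (1 - ‖x‖²)^(|β|/2)`, of degree at most `deg f`. -/

open MeasureTheory Metric

open scoped Pointwise
open MvPolynomial

instance Measure.toSphere.isNegInvariant {E : Type*} [NormedAddCommGroup E] [NormedSpace ℝ E]
    [MeasurableSpace E] [BorelSpace E] (μ : Measure E) [μ.IsNegInvariant] :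
    μ.toSphere.IsNegInvariant := by
  refine ⟨Measure.ext fun s hs => ?_⟩
  rw [Measure.neg_apply, μ.toSphere_apply' hs, μ.toSphere_apply' hs.neg]
  have : ((↑) '' (-s) : Set E) = -((↑) '' s) := Set.image_neg_of_apply_neg_eq_neg fun _ _ => rfl
  rw [this, Set.smul_neg, Measure.measure_neg]

theorem Function.Odd.integral_eq_zero {α F : Type*} [MeasurableSpace α] [InvolutiveNeg α]
    [MeasurableNeg α] [NormedAddCommGroup F] [NormedSpace ℝ F] {μ : Measure α} [μ.IsNegInvariant]
    {f : α → F} (hf : f.Odd) : ∫ x, f x ∂μ = 0 := by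
  have h := (MeasurableEquiv.neg α).measurableEmbedding.integral_map (μ := μ) f
  simp only [MeasurableEquiv.neg_apply, Measure.map_neg_eq_self, hf.eq, integral_neg] at h
  have h2 : (2 : ℝ) • ∫ x, f x ∂μ = 0 := by
    rw [two_smul]; nth_rewrite 2 [h]; exact add_neg_cancel _
  exact (smul_eq_zero.mp h2).resolve_left two_ne_zero

section MvPolynomial

variable {σ R : Type*}

theorem MvPolynomial.eval_append_smul [CommSemiring R] {d k : ℕ} (x : Fin d → R) (t : R)
    (y : Fin k → R) (f : MvPolynomial (Fin (d + k)) R) :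
    eval (Fin.append x (t • y)) f =
      ∑ a ∈ f.support, f.coeff a * (∏ i, x i ^ a (Fin.castAdd k i)) *
        (t ^ (∑ j, a (Fin.natAdd d j)) * ∏ j, y j ^ a (Fin.natAdd d j)) := by
  rw [eval_eq']
  refine Finset.sum_congr rfl fun a _ => ?_
  simp only [Fin.prod_univ_add, Fin.append_left, Fin.append_right, Pi.smul_apply, smul_eq_mul,
    mul_pow, Finset.prod_mul_distrib, Finset.prod_pow_eq_pow_sum, mul_assoc]

variable [Fintype σ]

theorem MvPolynomial.sum_apply_le_totalDegree [CommSemiring R] {p : MvPolynomial σ R}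
    {a : σ →₀ ℕ} (ha : a ∈ p.support) : ∑ i, a i ≤ p.totalDegree := by
  simpa [Finsupp.sum_fintype] using le_totalDegree ha

theorem MvPolynomial.totalDegree_prod_X_pow_le_s3 [CommSemiring R] [Nontrivial R] (e : σ → ℕ) :
    (∏ i, X i ^ e i : MvPolynomial σ R).totalDegree ≤ ∑ i, e i :=
  (totalDegree_finsetProd _ _).trans <| Finset.sum_le_sum fun i _ => (totalDegree_X_pow i _).le

theorem MvPolynomial.totalDegree_one_sub_sum_X_sq_le_s3 [CommRing R] [Nontrivial R] :
    (1 - ∑ i, X i ^ 2 : MvPolynomial σ R).totalDegree ≤ 2 :=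
  (totalDegree_sub _ _).trans <| max_le (by simp) <|
    (totalDegree_finsetSum _ _).trans <| Finset.sup_le fun i _ => (totalDegree_X_pow i 2).le

end MvPolynomial

section SphereMoment

variable {m : ℕ}

instance sphereMeasure.isNegInvariant : (sphereMeasure m).IsNegInvariant := by
  unfold sphereMeasure; infer_instance

instance sphereMeasure.isFiniteMeasure : IsFiniteMeasure (sphereMeasure m) := by
  unfold sphereMeasure; infer_instance

variable (m) in
noncomputable def sphereMoment (b : Fin (m + 1) → ℕ) : ℝ :=
  ∫ η : sphere (0 : EuclideanSpace ℝ (Fin (m + 1))) 1,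
    ∏ j, (η : EuclideanSpace ℝ (Fin (m + 1))) j ^ b j ∂sphereMeasure m

theorem integrable_prod_pow_sphere (b : Fin (m + 1) → ℕ) :
    Integrable (fun η : sphere (0 : EuclideanSpace ℝ (Fin (m + 1))) 1 =>
      ∏ j, (η : EuclideanSpace ℝ (Fin (m + 1))) j ^ b j) (sphereMeasure m) :=
  Continuous.integrable_of_hasCompactSupport (by fun_prop) (.of_compactSpace _)

theorem sphereMoment_eq_zero_of_odd {b : Fin (m + 1) → ℕ} (hb : Odd (∑ j, b j)) :
    sphereMoment m b = 0 :=
  Function.Odd.integral_eq_zero fun η => by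
    simp only [coe_neg_sphere, PiLp.neg_apply]
    rw [Finset.prod_congr rfl fun j _ => neg_pow _ (b j), Finset.prod_mul_distrib,
      Finset.prod_pow_eq_pow_sum, hb.neg_one_pow, neg_one_mul]

theorem pow_sum_mul_sphereMoment (t : ℝ) (b : Fin (m + 1) → ℕ) :
    t ^ (∑ j, b j) * sphereMoment m b = (t ^ 2) ^ ((∑ j, b j) / 2) * sphereMoment m b := by
  rcases Nat.even_or_odd (∑ j, b j) with ⟨r, hr⟩ | hodd
  · rw [hr, ← two_mul, Nat.mul_div_cancel_left r two_pos, pow_mul]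
  · rw [sphereMoment_eq_zero_of_odd hodd, mul_zero, mul_zero]

end SphereMoment

section SphereAverage

variable {d m : ℕ}

theorem ofLp_join (x : EuclideanSpace ℝ (Fin d)) (y : EuclideanSpace ℝ (Fin (m + 1))) :
    WithLp.ofLp (join x y) = Fin.append x y :=
  rfl

theorem integral_eval_join_smul (x : EuclideanSpace ℝ (Fin d)) (t : ℝ)
    (f : MvPolynomial (Fin (d + (m + 1))) ℝ) :
    ∫ η : sphere (0 : EuclideanSpace ℝ (Fin (m + 1))) 1,
        eval (fun i => join x (t • (η : EuclideanSpace ℝ (Fin (m + 1)))) i) f ∂sphereMeasure m =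
      ∑ a ∈ f.support, f.coeff a * (∏ i, x i ^ a (Fin.castAdd (m + 1) i)) *
        (t ^ (∑ j, a (Fin.natAdd d j)) * sphereMoment m fun j => a (Fin.natAdd d j)) := by
  simp only [ofLp_join, WithLp.ofLp_smul, eval_append_smul]
  rw [integral_finsetSum _ fun a _ => ((integrable_prod_pow_sphere _).const_mul _).const_mul _]
  refine Finset.sum_congr rfl fun a _ => ?_
  rw [integral_const_mul, integral_const_mul, sphereMoment]

/-- The truncating `/ 2` is harmless: for odd exponents the moment factor vanishes. -/
noncomputable def sphereAverage (f : MvPolynomial (Fin (d + (m + 1))) ℝ) :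
    MvPolynomial (Fin d) ℝ :=
  ∑ a ∈ f.support, C (f.coeff a) * (∏ i, X i ^ a (Fin.castAdd (m + 1) i)) *
    ((1 - ∑ i, X i ^ 2) ^ ((∑ j, a (Fin.natAdd d j)) / 2) *
      C (sphereMoment m fun j => a (Fin.natAdd d j)))

theorem eval_sphereAverage (f : MvPolynomial (Fin (d + (m + 1))) ℝ) (x : Fin d → ℝ) :
    eval x (sphereAverage f) =
      ∑ a ∈ f.support, f.coeff a * (∏ i, x i ^ a (Fin.castAdd (m + 1) i)) *
        ((1 - ∑ i, x i ^ 2) ^ ((∑ j, a (Fin.natAdd d j)) / 2) *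
          sphereMoment m fun j => a (Fin.natAdd d j)) := by
  simp [sphereAverage]

theorem totalDegree_sphereAverage_le (f : MvPolynomial (Fin (d + (m + 1))) ℝ) :
    (sphereAverage f).totalDegree ≤ f.totalDegree := by
  refine (totalDegree_finsetSum _ _).trans <| Finset.sup_le fun a ha => ?_
  have hdeg := sum_apply_le_totalDegree ha
  rw [Fin.sum_univ_add] at hdeg
  grw [totalDegree_mul, totalDegree_mul, totalDegree_mul, totalDegree_C, totalDegree_C,
    totalDegree_prod_X_pow_le_s3, totalDegree_pow, totalDegree_one_sub_sum_X_sq_le_s3]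
  omega

end SphereAverage

theorem sphere_average_is_polynomial_general (d m n : ℕ)
    (f : MvPolynomial (Fin (d + (m + 1))) ℝ) (hf : f.totalDegree ≤ n) :
    ∃ g : MvPolynomial (Fin d) ℝ, g.totalDegree ≤ n ∧
      ∀ x ∈ Metric.closedBall (0 : EuclideanSpace ℝ (Fin d)) 1,
        (∫ η : Metric.sphere (0 : EuclideanSpace ℝ (Fin (m + 1))) 1,
          MvPolynomial.eval
            (fun i => (join x
              (Real.sqrt (1 - ‖x‖ ^ 2) • (η : EuclideanSpace ℝ (Fin (m + 1))))) i) f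
          ∂(sphereMeasure m)) =
        MvPolynomial.eval (fun i => x i) g := by
  refine ⟨sphereAverage f, (totalDegree_sphereAverage_le f).trans hf, fun x hx => ?_⟩
  have hsq : Real.sqrt (1 - ‖x‖ ^ 2) ^ 2 = 1 - ∑ i, x i ^ 2 := by
    rw [Real.sq_sqrt, EuclideanSpace.real_norm_sq_eq]
    nlinarith [mem_closedBall_zero_iff.mp hx, norm_nonneg x]
  rw [integral_eval_join_smul, eval_sphereAverage]
  simp only [pow_sum_mul_sphereMoment, hsq]

theorem sphere_average_is_polynomial (d m n : ℕ) (hd : 0 < d) (hm : 0 < m)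
    (f : MvPolynomial (Fin (d + (m + 1))) ℝ) (hf : f.totalDegree ≤ n) :
    ∃ g : MvPolynomial (Fin d) ℝ, g.totalDegree ≤ n ∧
      ∀ x ∈ Metric.closedBall (0 : EuclideanSpace ℝ (Fin d)) 1,
        (∫ η : Metric.sphere (0 : EuclideanSpace ℝ (Fin (m + 1))) 1,
          MvPolynomial.eval
            (fun i => (join x
              (Real.sqrt (1 - ‖x‖ ^ 2) • (η : EuclideanSpace ℝ (Fin (m + 1))))) i) f
          ∂(sphereMeasure m)) =
        MvPolynomial.eval (fun i => x i) g :=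
  sphere_average_is_polynomial_general d m n f hf
end
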